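/- Let S̃_h u ∈ V_h denote the edgewise-affine extension of u ∈ ℝ^{n_D}, i.e. the function that is affine on each whole edge e∈E with vertex values (S̃_h u)(v)=u_v for v∈V_D and (S̃_h u)(v)=0 for v∈V_K. Then the discrete harmonic extension satisfies ‖S_h u‖_{H¹(Γ)} ≤ c ‖S̃_h u‖_{H¹(Γ)} with a constant c>0 independent of h and u. -/

import Mathlib

open MeasureTheory Set

/-- A metric graph: a finite graph where each edge `e` is identified with the
interval `[0, len e]`, with `src e` sitting at coordinate `0` and `dst e` at `len e`. -/
structure MGraph where
  V : Type
  E : Type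
  fintV : Fintype V
  fintE : Fintype E
  decV : DecidableEq V
  src : E → V
  dst : E → V
  len : E → ℝ
  len_pos : ∀ e, 0 < len e

attribute [instance] MGraph.fintV MGraph.fintE MGraph.decV

/-- A function on the metric graph, given edgewise. -/
abbrev GFun (G : MGraph) := G.E → ℝ → ℝ

namespace MGraph

variable (G : MGraph)

/-- The derivative along edge `e` (within the edge interval). -/
noncomputable def edgeDeriv (y : GFun G) (e : G.E) : ℝ → ℝ :=
  derivWithin (y e) (Icc (0:ℝ) (G.len e))

/-- The second derivative along edge `e`. -/
noncomputable def edgeDeriv2 (y : GFun G) (e : G.E) : ℝ → ℝ :=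
  derivWithin (G.edgeDeriv y e) (Icc (0:ℝ) (G.len e))

/-- The `L²(Γ)` inner product `(f,g) = Σ_e ∫_e f g`. -/
noncomputable def ip2 (f g : GFun G) : ℝ :=
  ∑ e : G.E, ∫ x in (0:ℝ)..(G.len e), f e x * g e x

/-- The bilinear form `a(y,w) = Σ_e ∫_e (y' w' + c₀ y w)`. -/
noncomputable def bform (c0 y w : GFun G) : ℝ :=
  ∑ e : G.E, ∫ x in (0:ℝ)..(G.len e),
    (G.edgeDeriv y e x * G.edgeDeriv w e x + c0 e x * y e x * w e x)

/-- Membership in `L²(Γ)` (edgewise square integrability). -/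
def MemL2 (f : GFun G) : Prop :=
  ∀ e, IntervalIntegrable (fun x => (f e x)^2) volume 0 (G.len e)

/-- The squared `L²(Γ)`-norm. -/
noncomputable def l2normSq (f : GFun G) : ℝ :=
  ∑ e : G.E, ∫ x in (0:ℝ)..(G.len e), (f e x)^2

/-- The squared `H¹(Γ)`-norm. -/
noncomputable def h1normSq (y : GFun G) : ℝ :=
  G.l2normSq y + ∑ e : G.E, ∫ x in (0:ℝ)..(G.len e), (G.edgeDeriv y e x)^2

/-- The squared `H²(Γ)`-seminorm `Σ_e ‖y''‖²`. -/
noncomputable def h2semiSq (y : GFun G) : ℝ :=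
  ∑ e : G.E, ∫ x in (0:ℝ)..(G.len e), (G.edgeDeriv2 y e x)^2

/-- Membership in `H¹(Γ)` with vertex values `yv` (in particular continuity
at the vertices of the graph). -/
def MemH1 (y : GFun G) (yv : G.V → ℝ) : Prop :=
  (∀ e, ContinuousOn (y e) (Icc (0:ℝ) (G.len e))) ∧
  (∀ e, ∃ s : Finset ℝ, ∀ x ∈ Icc (0:ℝ) (G.len e), x ∉ s →
      DifferentiableWithinAt ℝ (y e) (Icc (0:ℝ) (G.len e)) x) ∧
  (∀ e, y e 0 = yv (G.src e)) ∧
  (∀ e, y e (G.len e) = yv (G.dst e)) ∧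
  G.MemL2 y ∧
  (∀ e, IntervalIntegrable (fun x => (G.edgeDeriv y e x)^2) volume 0 (G.len e))

/-- Membership in `H¹_D(Γ)`: `H¹(Γ)` with vanishing values at the Dirichlet vertices. -/
def MemH1D (VD : Finset G.V) (y : GFun G) (yv : G.V → ℝ) : Prop :=
  G.MemH1 y yv ∧ ∀ v ∈ VD, yv v = 0

/-- Membership in `H²(Γ)` (edgewise; the function is `C¹` on each closed edge and the
first derivative is again weakly differentiable with square-integrable derivative). -/
def MemH2 (y : GFun G) : Prop :=
  (∀ e, ∀ x ∈ Icc (0:ℝ) (G.len e), DifferentiableWithinAt ℝ (y e) (Icc (0:ℝ) (G.len e)) x) ∧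
  (∀ e, ContinuousOn (G.edgeDeriv y e) (Icc (0:ℝ) (G.len e))) ∧
  (∀ e, ∀ᵐ x ∂(volume.restrict (Ioo (0:ℝ) (G.len e))),
      DifferentiableWithinAt ℝ (G.edgeDeriv y e) (Icc (0:ℝ) (G.len e)) x) ∧
  (∀ e, IntervalIntegrable (fun x => (G.edgeDeriv2 y e x)^2) volume 0 (G.len e))

/-- The Kirchhoff operator `(Ky)(v) = Σ_{e ∈ E_v} y|_e'(v)`, where the derivative along each
incident edge is taken in the direction pointing towards `v`. -/
noncomputable def Kop (y : GFun G) (v : G.V) : ℝ :=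
  ∑ e : G.E, ((if G.dst e = v then G.edgeDeriv y e (G.len e) else 0)
    - (if G.src e = v then G.edgeDeriv y e 0 else 0))

/-- Adjacency of vertices. -/
def Adj (v w : G.V) : Prop :=
  ∃ e, (G.src e = v ∧ G.dst e = w) ∨ (G.src e = w ∧ G.dst e = v)

/-- Connectedness of the graph. -/
def Connected : Prop := ∀ v w : G.V, Relation.ReflTransGen G.Adj v w

/-- The Euclidean norm of the restriction of `u` to the Dirichlet vertex set. -/
noncomputable def dnorm (VD : Finset G.V) (u : G.V → ℝ) : ℝ :=
  Real.sqrt (∑ v ∈ VD, (u v)^2)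

/-- `y` is affine on each cell of the equidistant grid with `n e` subintervals on edge `e`. -/
def PiecewiseAffine (n : G.E → ℕ) (y : GFun G) : Prop :=
  ∀ e, ∀ k : ℕ, k < n e →
    ∃ p q : ℝ, ∀ x ∈ Icc ((k : ℝ) * (G.len e / (n e : ℝ))) (((k : ℝ) + 1) * (G.len e / (n e : ℝ))),
      y e x = p * x + q

/-- Membership in the finite element space `V_h` (continuous, edgewise piecewise affine). -/
def MemVh (n : G.E → ℕ) (y : GFun G) (yv : G.V → ℝ) : Prop :=
  G.MemH1 y yv ∧ G.PiecewiseAffine n y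

/-- Membership in `V_{h,D} = V_h ∩ H¹_D(Γ)`. -/
def MemVhD (VD : Finset G.V) (n : G.E → ℕ) (y : GFun G) (yv : G.V → ℝ) : Prop :=
  G.MemVh n y yv ∧ ∀ v ∈ VD, yv v = 0

/-- The nodal (hat) basis function of `V_h` attached to the vertex `v`. -/
noncomputable def hatFn (n : G.E → ℕ) (v : G.V) : GFun G :=
  fun e x =>
    (if G.src e = v then max 0 (1 - x / (G.len e / (n e : ℝ))) else 0)
    + (if G.dst e = v then max 0 (1 - (G.len e - x) / (G.len e / (n e : ℝ))) else 0)

/-- The discrete (variational) Kirchhoff operator applied to `p_h = P_h ydata`: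
`(K_h p_h)(v) = a(φ_v, p_h) - (ydata, φ_v)`. -/
noncomputable def Khop (c0 : GFun G) (n : G.E → ℕ) (ydata ph : GFun G) (v : G.V) : ℝ :=
  G.bform c0 (G.hatFn n v) ph - G.ip2 ydata (G.hatFn n v)

/-- The objective functional `½‖y-ȳ‖² + (β/2)|u|₂²` of the optimal control problem. -/
noncomputable def objective (VD : Finset G.V) (ybar : GFun G) (β : ℝ)
    (u : G.V → ℝ) (y : GFun G) : ℝ :=
  (1/2) * G.l2normSq (fun e x => y e x - ybar e x) + (β/2) * ∑ v ∈ VD, (u v)^2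

/-- `(u, y)` is feasible for the continuous optimal control problem:
`y` is a weak solution of the state equation with Dirichlet data `u`. -/
def Feasible (VD : Finset G.V) (c0 f : GFun G) (u : G.V → ℝ)
    (y : GFun G) (yv : G.V → ℝ) : Prop :=
  G.MemH1 y yv ∧ (∀ v ∈ VD, yv v = u v) ∧
  ∀ w wv, G.MemH1D VD w wv → G.bform c0 y w = G.ip2 f w

/-- `(u, y)` is feasible for the discretized optimal control problem:
`y ∈ V_h` is a Galerkin solution of the state equation with Dirichlet data `u`. -/
def FeasibleH (VD : Finset G.V) (n : G.E → ℕ) (c0 f : GFun G) (u : G.V → ℝ)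
    (y : GFun G) (yv : G.V → ℝ) : Prop :=
  G.MemVh n y yv ∧ (∀ v ∈ VD, yv v = u v) ∧
  ∀ w wv, G.MemVhD VD n w wv → G.bform c0 y w = G.ip2 f w

/-- The edgewise-affine extension `S̃_h u` of Dirichlet data `u` (value `u v` at Dirichlet
vertices, `0` at Kirchhoff vertices, affine along each whole edge). -/
noncomputable def tildeExt (VD : Finset G.V) (u : G.V → ℝ) : GFun G :=
  fun e x =>
    (if G.src e ∈ VD then u (G.src e) else 0)
    + ((if G.dst e ∈ VD then u (G.dst e) else 0)
        - (if G.src e ∈ VD then u (G.src e) else 0)) * x / G.len e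

end MGraph

/-!
Put `w = S_h u - S̃_h u`. Since `S̃_h u` is affine on whole edges it lies in `V_h`, and it has the
same Dirichlet values as `S_h u`, so `w ∈ V_{h,D}` and Galerkin orthogonality gives
`a(S̃_h u, S̃_h u) = a(S_h u, S_h u) + a(w, w) ≥ a(w, w)`. Coercivity bounds `α ‖w‖²` by `a(w, w)`,
the bound `c₀ ≤ C` gives `a(S̃_h u, S̃_h u) ≤ max 1 C ‖S̃_h u‖²`, and
`‖S_h u‖² ≤ 2 ‖w‖² + 2 ‖S̃_h u‖²`; none of the constants involves the mesh.
-/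

section IntervalIntegral

variable {a b : ℝ}

lemma intervalIntegrable_mul_of_sq (hab : a ≤ b) {f g : ℝ → ℝ}
    (hf : AEStronglyMeasurable f (volume.restrict (Icc a b)))
    (hg : AEStronglyMeasurable g (volume.restrict (Icc a b)))
    (hf2 : IntervalIntegrable (fun x => f x ^ 2) volume a b)
    (hg2 : IntervalIntegrable (fun x => g x ^ 2) volume a b) :
    IntervalIntegrable (fun x => f x * g x) volume a b := by
  rw [intervalIntegrable_iff_integrableOn_Icc_of_le hab] at hf2 hg2 ⊢
  exact ((memLp_two_iff_integrable_sq hf).2 hf2).integrable_mul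
    ((memLp_two_iff_integrable_sq hg).2 hg2)

lemma intervalIntegrable_mul_mul_of_bounded (hab : a ≤ b) {c f g : ℝ → ℝ} {C : ℝ}
    (hc : Measurable c) (hcb : ∀ x ∈ Icc a b, |c x| ≤ C)
    (hf : ContinuousOn f (Icc a b)) (hg : ContinuousOn g (Icc a b)) :
    IntervalIntegrable (fun x => c x * f x * g x) volume a b := by
  rw [intervalIntegrable_iff_integrableOn_Icc_of_le hab]
  have hc' : IntegrableOn c (Icc a b) :=
    Measure.integrableOn_of_bounded measure_Icc_lt_top.ne hc.aestronglyMeasurable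
      (ae_restrict_of_forall_mem measurableSet_Icc hcb)
  simpa only [mul_assoc] using
    hc'.mul_continuousOn (g' := fun x => f x * g x) (hf.mul hg) isCompact_Icc

lemma integral_sq_le_two_mul_add (hab : a ≤ b) {f g h : ℝ → ℝ}
    (hfgh : ∀ᵐ x ∂volume.restrict (Icc a b), f x = g x + h x)
    (hf : IntervalIntegrable (fun x => f x ^ 2) volume a b)
    (hg : IntervalIntegrable (fun x => g x ^ 2) volume a b)
    (hh : IntervalIntegrable (fun x => h x ^ 2) volume a b) :
    ∫ x in a..b, f x ^ 2 ≤ 2 * (∫ x in a..b, g x ^ 2) + 2 * ∫ x in a..b, h x ^ 2 := by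
  have hmono := intervalIntegral.integral_mono_ae_restrict hab hf
      ((hg.const_mul 2).add (hh.const_mul 2)) <| by
    filter_upwards [hfgh] with x hx
    exact hx ▸ add_sq_le.trans_eq (mul_add _ _ _)
  rwa [intervalIntegral.integral_add (hg.const_mul 2) (hh.const_mul 2),
    intervalIntegral.integral_const_mul, intervalIntegral.integral_const_mul] at hmono

end IntervalIntegral

namespace MGraph

variable {G : MGraph}

lemma MemH1.continuousOn {y : GFun G} {yv : G.V → ℝ} (hy : G.MemH1 y yv) (e : G.E) :
    ContinuousOn (y e) (Icc 0 (G.len e)) :=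
  hy.1 e

lemma MemH1.intervalIntegrable_sq {y : GFun G} {yv : G.V → ℝ} (hy : G.MemH1 y yv) (e : G.E) :
    IntervalIntegrable (fun x => y e x ^ 2) volume 0 (G.len e) :=
  hy.2.2.2.2.1 e

lemma MemH1.intervalIntegrable_edgeDeriv_sq {y : GFun G} {yv : G.V → ℝ} (hy : G.MemH1 y yv)
    (e : G.E) : IntervalIntegrable (fun x => G.edgeDeriv y e x ^ 2) volume 0 (G.len e) :=
  hy.2.2.2.2.2 e

lemma aestronglyMeasurable_edgeDeriv (y : GFun G) (e : G.E) :
    AEStronglyMeasurable (G.edgeDeriv y e) (volume.restrict (Icc 0 (G.len e))) := by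
  refine (measurable_deriv (y e)).aestronglyMeasurable.congr ?_
  rw [← Measure.restrict_congr_set Ioo_ae_eq_Icc]
  filter_upwards [ae_restrict_mem measurableSet_Ioo] with x hx
  exact (derivWithin_of_mem_nhds (Icc_mem_nhds hx.1 hx.2)).symm

lemma MemH1.ae_differentiableWithinAt {y : GFun G} {yv : G.V → ℝ} (hy : G.MemH1 y yv)
    (e : G.E) : ∀ᵐ x ∂volume.restrict (Icc 0 (G.len e)),
      DifferentiableWithinAt ℝ (y e) (Icc 0 (G.len e)) x := by
  obtain ⟨s, hs⟩ := hy.2.1 e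
  filter_upwards [ae_restrict_mem measurableSet_Icc,
    ae_restrict_of_ae (s.countable_toSet.ae_notMem volume)] with x hx hxs
  exact hs x hx hxs

lemma edgeDeriv_sub_ae_eq {y z : GFun G} {yv zv : G.V → ℝ} (hy : G.MemH1 y yv)
    (hz : G.MemH1 z zv) (e : G.E) :
    G.edgeDeriv (y - z) e =ᵐ[volume.restrict (Icc 0 (G.len e))]
      G.edgeDeriv y e - G.edgeDeriv z e := by
  filter_upwards [hy.ae_differentiableWithinAt e, hz.ae_differentiableWithinAt e] with x hyx hzx
  exact derivWithin_sub hyx hzx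

lemma MemH1.sub {y z : GFun G} {yv zv : G.V → ℝ} (hy : G.MemH1 y yv) (hz : G.MemH1 z zv) :
    G.MemH1 (y - z) (yv - zv) := by
  have hd := edgeDeriv_sub_ae_eq hy hz
  obtain ⟨hyc, hyd, hy0, hyL, -, hy'⟩ := hy
  obtain ⟨hzc, hzd, hz0, hzL, -, hz'⟩ := hz
  refine ⟨fun e => (hyc e).sub (hzc e), fun e => ?_, fun e => by simp [hy0 e, hz0 e],
    fun e => by simp [hyL e, hzL e],
    fun e => (((hyc e).sub (hzc e)).pow 2).intervalIntegrable_of_Icc (G.len_pos e).le,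
    fun e => ?_⟩
  · obtain ⟨s, hs⟩ := hyd e
    obtain ⟨t, ht⟩ := hzd e
    refine ⟨s ∪ t, fun x hx hxst => ?_⟩
    rw [Finset.mem_union, not_or] at hxst
    exact (hs x hx hxst.1).sub (ht x hx hxst.2)
  · have hy'e := hy' e
    have hz'e := hz' e
    rw [intervalIntegrable_iff_integrableOn_Icc_of_le (G.len_pos e).le] at hy'e hz'e ⊢
    refine Integrable.mono' (g := fun x => 2 * (G.edgeDeriv y e x ^ 2 + G.edgeDeriv z e x ^ 2))
      ((hy'e.add hz'e).const_mul 2) ((aestronglyMeasurable_edgeDeriv _ e).pow 2) ?_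
    filter_upwards [hd e] with x hx
    rw [Real.norm_of_nonneg (sq_nonneg _), hx, Pi.sub_apply, sub_eq_add_neg,
      ← neg_sq (G.edgeDeriv z e x)]
    exact add_sq_le

lemma MemVh.sub {n : G.E → ℕ} {y z : GFun G} {yv zv : G.V → ℝ} (hy : G.MemVh n y yv)
    (hz : G.MemVh n z zv) : G.MemVh n (y - z) (yv - zv) := by
  refine ⟨hy.1.sub hz.1, fun e k hk => ?_⟩
  obtain ⟨p, q, hpq⟩ := hy.2 e k hk
  obtain ⟨p', q', hpq'⟩ := hz.2 e k hk
  refine ⟨p - p', q - q', fun x hx => ?_⟩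
  rw [Pi.sub_apply, Pi.sub_apply, hpq x hx, hpq' x hx]
  ring

lemma memVh_of_affine {y : GFun G} {yv : G.V → ℝ} (p q : G.E → ℝ)
    (hy : ∀ e x, y e x = p e * x + q e) (h0 : ∀ e, y e 0 = yv (G.src e))
    (hL : ∀ e, y e (G.len e) = yv (G.dst e)) (n : G.E → ℕ) : G.MemVh n y yv := by
  have hderiv : ∀ e x, HasDerivAt (y e) (p e) x := fun e x => by
    rw [show y e = fun x => p e * x + q e from funext (hy e)]
    simpa using ((hasDerivAt_id x).const_mul (p e)).add_const (q e)
  have hcont : ∀ e, Continuous (y e) := fun e =>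
    continuous_iff_continuousAt.2 fun x => (hderiv e x).continuousAt
  have hslope : ∀ e, EqOn (G.edgeDeriv y e) (fun _ => p e) (Icc 0 (G.len e)) := fun e x hx =>
    (hderiv e x).hasDerivWithinAt.derivWithin (uniqueDiffOn_Icc (G.len_pos e) x hx)
  refine ⟨⟨fun e => (hcont e).continuousOn,
    fun e => ⟨∅, fun x _ _ => (hderiv e x).differentiableAt.differentiableWithinAt⟩, h0, hL,
    fun e => ((hcont e).pow 2).intervalIntegrable _ _,
    fun e => ((continuousOn_const.congr (hslope e)).pow 2).intervalIntegrable_of_Icc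
      (G.len_pos e).le⟩,
    fun e _ _ => ⟨p e, q e, fun x _ => hy e x⟩⟩

lemma memVh_tildeExt (VD : Finset G.V) (u : G.V → ℝ) (n : G.E → ℕ) :
    G.MemVh n (G.tildeExt VD u) ((VD : Set G.V).indicator u) := by
  set d := (VD : Set G.V).indicator u with hd
  refine memVh_of_affine (fun e => (d (G.dst e) - d (G.src e)) / G.len e) (fun e => d (G.src e))
    (fun e x => ?_) (fun e => ?_) (fun e => ?_) n
  · simp only [tildeExt, hd, Set.indicator_apply, Finset.mem_coe]
    ring
  · simp [tildeExt, hd, Set.indicator_apply]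
  · simp only [tildeExt, hd, Set.indicator_apply, Finset.mem_coe]
    field_simp [(G.len_pos e).ne']
    ring

lemma h1normSq_le_two_mul_sub_add {y z : GFun G} {yv zv : G.V → ℝ} (hy : G.MemH1 y yv)
    (hz : G.MemH1 z zv) : G.h1normSq y ≤ 2 * G.h1normSq (y - z) + 2 * G.h1normSq z := by
  have hyz := hy.sub hz
  have hval := Finset.sum_le_sum fun e (_ : e ∈ Finset.univ) =>
    integral_sq_le_two_mul_add (G.len_pos e).le (g := (y - z) e)
      (ae_of_all _ fun x => (sub_add_cancel (y e x) (z e x)).symm)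
      (hy.intervalIntegrable_sq e) (hyz.intervalIntegrable_sq e) (hz.intervalIntegrable_sq e)
  have hder := Finset.sum_le_sum fun e (_ : e ∈ Finset.univ) =>
    integral_sq_le_two_mul_add (G.len_pos e).le
      (by filter_upwards [edgeDeriv_sub_ae_eq hy hz e] with x hx
          rw [hx, Pi.sub_apply, sub_add_cancel])
      (hy.intervalIntegrable_edgeDeriv_sq e) (hyz.intervalIntegrable_edgeDeriv_sq e)
      (hz.intervalIntegrable_edgeDeriv_sq e)
  simp only [Finset.sum_add_distrib, ← Finset.mul_sum] at hval hder
  simp only [h1normSq, l2normSq]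
  linarith

section BilinearForm

variable {c0 : GFun G}

variable (G) in
noncomputable def bformIntegrand (c0 y z : GFun G) (e : G.E) (x : ℝ) : ℝ :=
  G.edgeDeriv y e x * G.edgeDeriv z e x + c0 e x * y e x * z e x

lemma bform_eq_sum_integral_bformIntegrand (y z : GFun G) :
    G.bform c0 y z = ∑ e, ∫ x in (0:ℝ)..G.len e, G.bformIntegrand c0 y z e x :=
  rfl

lemma intervalIntegrable_bformIntegrand {C : ℝ} (hc0meas : ∀ e, Measurable (c0 e))
    (hcb : ∀ e, ∀ x ∈ Icc (0:ℝ) (G.len e), |c0 e x| ≤ C) {y z : GFun G} {yv zv : G.V → ℝ}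
    (hy : G.MemH1 y yv) (hz : G.MemH1 z zv) (e : G.E) :
    IntervalIntegrable (G.bformIntegrand c0 y z e) volume 0 (G.len e) :=
  (intervalIntegrable_mul_of_sq (G.len_pos e).le (aestronglyMeasurable_edgeDeriv y e)
    (aestronglyMeasurable_edgeDeriv z e) (hy.intervalIntegrable_edgeDeriv_sq e)
    (hz.intervalIntegrable_edgeDeriv_sq e)).add
  (intervalIntegrable_mul_mul_of_bounded (G.len_pos e).le (hc0meas e) (hcb e)
    (hy.continuousOn e) (hz.continuousOn e))

lemma bform_sub_sub {C : ℝ} (hc0meas : ∀ e, Measurable (c0 e))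
    (hcb : ∀ e, ∀ x ∈ Icc (0:ℝ) (G.len e), |c0 e x| ≤ C) {y z : GFun G} {yv zv : G.V → ℝ}
    (hy : G.MemH1 y yv) (hz : G.MemH1 z zv) :
    G.bform c0 (y - z) (y - z) = G.bform c0 y y - 2 * G.bform c0 y z + G.bform c0 z z := by
  have hedge : ∀ e, ∫ x in (0:ℝ)..G.len e, G.bformIntegrand c0 (y - z) (y - z) e x
      = (∫ x in (0:ℝ)..G.len e, G.bformIntegrand c0 y y e x)
        - 2 * (∫ x in (0:ℝ)..G.len e, G.bformIntegrand c0 y z e x)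
        + ∫ x in (0:ℝ)..G.len e, G.bformIntegrand c0 z z e x := by
    intro e
    have hyy := intervalIntegrable_bformIntegrand hc0meas hcb hy hy e
    have hyz := (intervalIntegrable_bformIntegrand hc0meas hcb hy hz e).const_mul 2
    have hzz := intervalIntegrable_bformIntegrand hc0meas hcb hz hz e
    rw [← intervalIntegral.integral_const_mul, ← intervalIntegral.integral_sub hyy hyz,
      ← intervalIntegral.integral_add (hyy.sub hyz) hzz]
    refine intervalIntegral.integral_congr_ae_restrict ?_
    have hsub : uIoc 0 (G.len e) ⊆ Icc 0 (G.len e) := by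
      rw [uIoc_of_le (G.len_pos e).le]
      exact Ioc_subset_Icc_self
    filter_upwards [ae_restrict_of_ae_restrict_of_subset hsub (edgeDeriv_sub_ae_eq hy hz e)]
      with x hx
    simp only [bformIntegrand, hx, Pi.sub_apply]
    ring
  simp only [bform_eq_sum_integral_bformIntegrand, hedge, Finset.sum_add_distrib,
    Finset.sum_sub_distrib, Finset.mul_sum]

lemma bform_self_nonneg (hc0 : ∀ e, ∀ x ∈ Icc (0:ℝ) (G.len e), 0 ≤ c0 e x) (y : GFun G) :
    0 ≤ G.bform c0 y y :=
  Finset.sum_nonneg fun e _ => intervalIntegral.integral_nonneg (G.len_pos e).le fun x hx =>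
    add_nonneg (mul_self_nonneg _)
      (mul_assoc (c0 e x) _ _ ▸ mul_nonneg (hc0 e x hx) (mul_self_nonneg _))

lemma bform_self_le {C : ℝ} (hc0meas : ∀ e, Measurable (c0 e))
    (hcb : ∀ e, ∀ x ∈ Icc (0:ℝ) (G.len e), |c0 e x| ≤ C) {y : GFun G} {yv : G.V → ℝ}
    (hy : G.MemH1 y yv) : G.bform c0 y y ≤ max 1 C * G.h1normSq y := by
  set M := max 1 C
  have hedge : ∀ e, ∫ x in (0:ℝ)..G.len e, G.bformIntegrand c0 y y e x
      ≤ M * (∫ x in (0:ℝ)..G.len e, y e x ^ 2)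
        + M * ∫ x in (0:ℝ)..G.len e, G.edgeDeriv y e x ^ 2 := by
    intro e
    have hy2 := (hy.intervalIntegrable_sq e).const_mul M
    have hy'2 := (hy.intervalIntegrable_edgeDeriv_sq e).const_mul M
    have hmono := intervalIntegral.integral_mono_on (G.len_pos e).le
      (intervalIntegrable_bformIntegrand hc0meas hcb hy hy e) (hy2.add hy'2) fun x hx => by
        have hc : c0 e x ≤ M := (le_abs_self _).trans ((hcb e x hx).trans (le_max_right _ _))
        simp only [bformIntegrand]
        nlinarith [mul_le_mul_of_nonneg_right hc (sq_nonneg (y e x)),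
          le_mul_of_one_le_left (sq_nonneg (G.edgeDeriv y e x)) (le_max_left 1 C)]
    rwa [intervalIntegral.integral_add hy2 hy'2, intervalIntegral.integral_const_mul,
      intervalIntegral.integral_const_mul] at hmono
  calc G.bform c0 y y
      ≤ ∑ e, (M * (∫ x in (0:ℝ)..G.len e, y e x ^ 2)
        + M * ∫ x in (0:ℝ)..G.len e, G.edgeDeriv y e x ^ 2) :=
        Finset.sum_le_sum fun e _ => hedge e
    _ = M * G.h1normSq y := by
        simp only [h1normSq, l2normSq, Finset.sum_add_distrib, Finset.mul_sum, mul_add]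

end BilinearForm

end MGraph

theorem discrete_harmonic_extension_le_affine_extension_general
    (G : MGraph) (VD : Finset G.V) (c0 : GFun G)
    (hc0meas : ∀ e, Measurable (c0 e))
    (hc0 : ∀ e, ∀ x ∈ Icc (0:ℝ) (G.len e), 0 ≤ c0 e x)
    (hc0b : ∃ C : ℝ, ∀ e, ∀ x ∈ Icc (0:ℝ) (G.len e), c0 e x ≤ C)
    -- `a` is assumed bounded and coercive on `H¹_D(Γ)`
    (hcoer : ∃ α > 0, ∀ y yv, G.MemH1D VD y yv → α * G.h1normSq y ≤ G.bform c0 y y) :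
    ∃ c > 0, ∀ (n : G.E → ℕ), (∀ e, 0 < n e) →
      ∀ (u : G.V → ℝ) (Shu : GFun G) (Shuv : G.V → ℝ),
        G.MemVh n Shu Shuv → (∀ v ∈ VD, Shuv v = u v) →
        (∀ w wv, G.MemVhD VD n w wv → G.bform c0 Shu w = 0) →
        Real.sqrt (G.h1normSq Shu) ≤ c * Real.sqrt (G.h1normSq (G.tildeExt VD u)) := by
  obtain ⟨C, hC⟩ := hc0b
  obtain ⟨α, hα, hcoer⟩ := hcoer
  have hcb : ∀ e, ∀ x ∈ Icc (0:ℝ) (G.len e), |c0 e x| ≤ C := fun e x hx =>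
    (abs_of_nonneg (hc0 e x hx)).trans_le (hC e x hx)
  set M := max 1 C
  have hK : 0 < 2 * M / α + 2 := by positivity
  refine ⟨Real.sqrt (2 * M / α + 2), Real.sqrt_pos.2 hK,
    fun n _ u Shu Shuv hShu hShuD horth => ?_⟩
  set t := G.tildeExt VD u
  have ht := MGraph.memVh_tildeExt VD u n
  have hw : G.MemVhD VD n (Shu - t) (Shuv - (VD : Set G.V).indicator u) :=
    ⟨hShu.sub ht, fun v hv => by simp [hShuD v hv, hv]⟩
  have hwt : G.bform c0 (Shu - t) (Shu - t) ≤ G.bform c0 t t := by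
    have hsplit := MGraph.bform_sub_sub hc0meas hcb hShu.1 hw.1.1
    rw [sub_sub_cancel, horth _ _ hw] at hsplit
    linarith [MGraph.bform_self_nonneg hc0 Shu]
  have hw_le : G.h1normSq (Shu - t) ≤ M / α * G.h1normSq t := by
    rw [div_mul_eq_mul_div, le_div_iff₀ hα, mul_comm]
    exact (hcoer _ _ ⟨hw.1.1, hw.2⟩).trans (hwt.trans (MGraph.bform_self_le hc0meas hcb ht.1))
  have hS : G.h1normSq Shu ≤ (2 * M / α + 2) * G.h1normSq t := by
    have hsplit := MGraph.h1normSq_le_two_mul_sub_add hShu.1 ht.1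
    rw [add_mul, mul_div_assoc, mul_assoc]
    linarith
  calc Real.sqrt (G.h1normSq Shu) ≤ Real.sqrt ((2 * M / α + 2) * G.h1normSq t) :=
        Real.sqrt_le_sqrt hS
    _ = Real.sqrt (2 * M / α + 2) * Real.sqrt (G.h1normSq t) := Real.sqrt_mul hK.le _

/-- the discrete harmonic extension is bounded by the edgewise-affine
extension, `‖S_h u‖_{H¹(Γ)} ≤ c ‖S̃_h u‖_{H¹(Γ)}` with `c` independent of `h` and `u`. -/
theorem discrete_harmonic_extension_le_affine_extension
    (G : MGraph) (VD : Finset G.V) (c0 : GFun G)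
    (hc0meas : ∀ e, Measurable (c0 e))
    (hc0 : ∀ e, ∀ x ∈ Icc (0:ℝ) (G.len e), 0 ≤ c0 e x)
    (hc0b : ∃ C : ℝ, ∀ e, ∀ x ∈ Icc (0:ℝ) (G.len e), c0 e x ≤ C)
    -- `a` is assumed bounded and coercive on `H¹_D(Γ)`
    (hbdd : ∃ C > 0, ∀ y yv w wv, G.MemH1D VD y yv → G.MemH1D VD w wv →
      |G.bform c0 y w| ≤ C * Real.sqrt (G.h1normSq y) * Real.sqrt (G.h1normSq w))
    (hcoer : ∃ α > 0, ∀ y yv, G.MemH1D VD y yv → α * G.h1normSq y ≤ G.bform c0 y y) :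
    ∃ c > 0, ∀ (n : G.E → ℕ), (∀ e, 0 < n e) →
      ∀ (u : G.V → ℝ) (Shu : GFun G) (Shuv : G.V → ℝ),
        G.MemVh n Shu Shuv → (∀ v ∈ VD, Shuv v = u v) →
        (∀ w wv, G.MemVhD VD n w wv → G.bform c0 Shu w = 0) →
        Real.sqrt (G.h1normSq Shu) ≤ c * Real.sqrt (G.h1normSq (G.tildeExt VD u)) :=
  discrete_harmonic_extension_le_affine_extension_general G VD c0 hc0meas hc0 hc0b hcoer
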